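/- arXiv:2005.03239 — 13 statements merged into one kernel-verified Lean document; each statement's English description precedes it below -/
import Mathlib

section
/- For every function f : Ω → ℝ, the identity E[f]/π_s = E_0[f]/π^0_s + E_q[f]/π^q_s − f(s) holds. (First identity of Proposition 1: Markov chain decomposition of the full chain into subchain 0 and subchain q, which overlap exactly in state s.) -/
open Finset

/-- Departure rate of the two-stage reneging birth-death chain. -/
noncomputable def depRate (s n1 : ℕ) (μ θ1 θ2 : ℝ) (k : ℕ) : ℝ :=
  if k ≤ s then (k : ℝ) * μ
  else if k ≤ s + n1 then (s : ℝ) * μ + ((k : ℝ) - (s : ℝ)) * θ1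
  else (s : ℝ) * μ + (n1 : ℝ) * θ1 + ((k : ℝ) - (s : ℝ) - (n1 : ℝ)) * θ2

/-- Stationary probability of state `k` in the subchain with state set `A`. -/
noncomputable def subProb (π : ℕ → ℝ) (A : Finset ℕ) (k : ℕ) : ℝ :=
  π k / ∑ k' ∈ A, π k'

lemma sub_ratio (π : ℕ → ℝ) (A : Finset ℕ) (f : ℕ → ℝ) (s : ℕ)
    (hS : (∑ k' ∈ A, π k') ≠ 0) :
    (∑ k ∈ A, f k * subProb π A k) / (subProb π A s) =
      (∑ k ∈ A, f k * π k) / π s := by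
  simp only [subProb]
  have h : ∑ k ∈ A, f k * (π k / ∑ k' ∈ A, π k') = (∑ k ∈ A, f k * π k) / ∑ k' ∈ A, π k' := by
    rw [Finset.sum_div]; exact Finset.sum_congr rfl fun k _ => by ring
  rw [h, div_div_div_eq, mul_comm (∑ k ∈ A, f k * π k), mul_div_mul_left _ _ hS]

theorem stmt_0 (lam μ θ1 θ2 : ℝ) (hlam : 0 < lam) (hμ : 0 < μ)
    (hθ1 : 0 < θ1) (hθ2 : 0 < θ2) (s n1 n2 : ℕ) (hs : 1 ≤ s) (π : ℕ → ℝ)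
    (hpos : ∀ k ∈ Finset.Icc 0 (s + n1 + n2), 0 < π k)
    (hbal : ∀ k, 1 ≤ k → k ≤ s + n1 + n2 →
      π k * depRate s n1 μ θ1 θ2 k = π (k - 1) * lam)
    (hsum : ∑ k ∈ Finset.Icc 0 (s + n1 + n2), π k = 1)
    (f : ℕ → ℝ) :
    (∑ k ∈ Finset.Icc 0 (s + n1 + n2), f k * π k) / π s =
      (∑ k ∈ Finset.Icc 0 s, f k * subProb π (Finset.Icc 0 s) k) / (subProb π (Finset.Icc 0 s) s) + (∑ k ∈ Finset.Icc s (s + n1 + n2), f k * subProb π (Finset.Icc s (s + n1 + n2)) k) / (subProb π (Finset.Icc s (s + n1 + n2)) s) - f s := by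
  have hsub : Finset.Icc 0 s ⊆ Finset.Icc 0 (s + n1 + n2) :=
    Finset.Icc_subset_Icc le_rfl (by omega)
  have hsub2 : Finset.Icc s (s + n1 + n2) ⊆ Finset.Icc 0 (s + n1 + n2) :=
    Finset.Icc_subset_Icc (by omega) le_rfl
  have hS0 : (0:ℝ) < ∑ k' ∈ Finset.Icc 0 s, π k' :=
    Finset.sum_pos (fun k hk => hpos k (hsub hk)) ⟨s, Finset.mem_Icc.mpr ⟨by omega, by omega⟩⟩
  have hSq : (0:ℝ) < ∑ k' ∈ Finset.Icc s (s + n1 + n2), π k' :=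
    Finset.sum_pos (fun k hk => hpos k (hsub2 hk)) ⟨s, Finset.mem_Icc.mpr ⟨by omega, by omega⟩⟩
  have hπs : (0:ℝ) < π s := hpos s (Finset.mem_Icc.mpr ⟨by omega, by omega⟩)
  rw [sub_ratio _ _ _ _ hS0.ne', sub_ratio _ _ _ _ hSq.ne']
  have hunion : Finset.Icc 0 s ∪ Finset.Icc s (s + n1 + n2)
      = Finset.Icc 0 (s + n1 + n2) := by
    ext k; simp [Finset.mem_Icc]; omega
  have hinter : Finset.Icc 0 s ∩ Finset.Icc s (s + n1 + n2) = {s} := by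
    ext k; simp [Finset.mem_Icc]; omega
  have hsplit : (∑ k ∈ Finset.Icc 0 s ∪ Finset.Icc s (s + n1 + n2), f k * π k)
      + (∑ k ∈ Finset.Icc 0 s ∩ Finset.Icc s (s + n1 + n2), f k * π k)
      = (∑ k ∈ Finset.Icc 0 s, f k * π k) + ∑ k ∈ Finset.Icc s (s + n1 + n2), f k * π k :=
    Finset.sum_union_inter
  rw [hunion, hinter, Finset.sum_singleton] at hsplit
  have key : (∑ k ∈ Finset.Icc 0 (s + n1 + n2), f k * π k)
      = (∑ k ∈ Finset.Icc 0 s, f k * π k) + (∑ k ∈ Finset.Icc s (s + n1 + n2), f k * π k) - f s * π s := by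
    linarith
  rw [key]
  field_simp
end

section
/- For every function f : Ω → ℝ, the identity E_q[f]/π^q_s = E_1[f]/π^1_s + r1·( E_2[f]/π^2_{s+n1} − f(s+n1) ) holds. (Second identity of Proposition 1: decomposition of subchain q into subchain 1 and subchain 2, which overlap exactly in state s+n1.) -/
open Finset

theorem stmt_1 (lam μ θ1 θ2 : ℝ) (hlam : 0 < lam) (hμ : 0 < μ)
    (hθ1 : 0 < θ1) (hθ2 : 0 < θ2) (s n1 n2 : ℕ) (hs : 1 ≤ s) (π : ℕ → ℝ)
    (hpos : ∀ k ∈ Finset.Icc 0 (s + n1 + n2), 0 < π k)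
    (hbal : ∀ k, 1 ≤ k → k ≤ s + n1 + n2 →
      π k * depRate s n1 μ θ1 θ2 k = π (k - 1) * lam)
    (hsum : ∑ k ∈ Finset.Icc 0 (s + n1 + n2), π k = 1)
    (f : ℕ → ℝ) :
    (∑ k ∈ Finset.Icc s (s + n1 + n2), f k * subProb π (Finset.Icc s (s + n1 + n2)) k) / (subProb π (Finset.Icc s (s + n1 + n2)) s) =
      (∑ k ∈ Finset.Icc s (s + n1), f k * subProb π (Finset.Icc s (s + n1)) k) / (subProb π (Finset.Icc s (s + n1)) s) + (subProb π (Finset.Icc s (s + n1)) (s + n1) / (subProb π (Finset.Icc s (s + n1)) s)) * ((∑ k ∈ Finset.Icc (s + n1) (s + n1 + n2), f k * subProb π (Finset.Icc (s + n1) (s + n1 + n2)) k) / (subProb π (Finset.Icc (s + n1) (s + n1 + n2)) (s + n1)) - f (s + n1)) := by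
  -- positivity facts
  have hposA : ∀ (A : Finset ℕ), A ⊆ Finset.Icc 0 (s + n1 + n2) → A.Nonempty →
      0 < ∑ k ∈ A, π k := by
    intro A hA hne
    exact Finset.sum_pos (fun k hk => hpos k (hA hk)) hne
  have hq : 0 < ∑ k ∈ Finset.Icc s (s + n1 + n2), π k :=
    hposA _ (Finset.Icc_subset_Icc (by omega) (by omega)) ⟨s, by simp [Finset.mem_Icc]; omega⟩
  have h1 : 0 < ∑ k ∈ Finset.Icc s (s + n1), π k :=
    hposA _ (Finset.Icc_subset_Icc (by omega) (by omega)) ⟨s, by simp [Finset.mem_Icc]⟩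
  have h2 : 0 < ∑ k ∈ Finset.Icc (s + n1) (s + n1 + n2), π k :=
    hposA _ (Finset.Icc_subset_Icc (by omega) (by omega)) ⟨s + n1, by simp [Finset.mem_Icc]⟩
  have hπs : 0 < π s := hpos s (by simp [Finset.mem_Icc]; omega)
  have hπm : 0 < π (s + n1) := hpos (s + n1) (by simp [Finset.mem_Icc])
  -- reduce subProb ratios
  have key : ∀ (A : Finset ℕ) (a : ℕ), (∑ k' ∈ A, π k') ≠ 0 → π a ≠ 0 →
      (∑ k ∈ A, f k * subProb π A k) / subProb π A a
        = (∑ k ∈ A, f k * π k) / π a := by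
    intro A a hS ha
    simp only [subProb]
    rw [show (∑ k ∈ A, f k * (π k / ∑ k' ∈ A, π k')) = (∑ k ∈ A, f k * π k) / ∑ k' ∈ A, π k' by
      rw [Finset.sum_div]; exact Finset.sum_congr rfl fun k _ => (mul_div_assoc _ _ _).symm]
    field_simp
  have hr1 : subProb π (Finset.Icc s (s + n1)) (s + n1) / subProb π (Finset.Icc s (s + n1)) s
      = π (s + n1) / π s := by
    simp only [subProb]
    field_simp
  rw [key _ _ hq.ne' hπs.ne', key _ _ h1.ne' hπs.ne', key _ _ h2.ne' hπm.ne', hr1]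
  -- split the big sum
  have hsplit : ∀ g : ℕ → ℝ, ∑ k ∈ Finset.Icc s (s + n1 + n2), g k
      = ∑ k ∈ Finset.Icc s (s + n1), g k + ∑ k ∈ Finset.Icc (s + n1) (s + n1 + n2), g k
        - g (s + n1) := by
    intro g
    have hu : Finset.Icc s (s + n1) ∪ Finset.Ioc (s + n1) (s + n1 + n2)
        = Finset.Icc s (s + n1 + n2) := by
      ext x
      simp [Finset.mem_Icc, Finset.mem_Ioc, Finset.mem_union]
      omega
    have hd : Disjoint (Finset.Icc s (s + n1)) (Finset.Ioc (s + n1) (s + n1 + n2)) := by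
      rw [Finset.disjoint_left]
      intro x hx hx'
      simp [Finset.mem_Icc] at hx
      simp [Finset.mem_Ioc] at hx'
      omega
    have h2s : ∑ k ∈ Finset.Icc (s + n1) (s + n1 + n2), g k
        = g (s + n1) + ∑ k ∈ Finset.Ioc (s + n1) (s + n1 + n2), g k := by
      rw [Finset.Icc_eq_cons_Ioc (by omega), Finset.sum_cons]
    rw [← hu, Finset.sum_union hd, h2s]
    ring
  rw [hsplit (fun k => f k * π k)]
  field_simp
  ring
end

section
/- The abandonment probability satisfies P_A/π_s = p·(1/π^q_s − 1) + 1 = p·[ (1/π^1_s − 1) + r1·(1/π^2_{s+n1} − 1) ] + 1, where p = 1 − s·μ/λ. (Equation (6) of Proposition 2.) -/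
/-!
Above the staffing level `s` the balance equations give `a_k π_k = (μ_k - sμ) π_k
= λ π_{k-1} - sμ π_k`, so together with the blocking term `λ π_{s+n1+n2}` the abandonment
flow telescopes to `(λ - sμ) Σ_{Aq} π + sμ π_s`. Dividing by `λ π_s` gives the first form.
The second follows because `A1` and `A2` cover `Aq` and overlap only in `s + n1`, and
`r1 = π_{s+n1} / π_s`.
-/

open Finset

/-- Abandonment (reneging + blocking) rate at state `k`. -/
noncomputable def abandonRate (s n1 n2 : ℕ) (lam μ θ1 θ2 : ℝ) (k : ℕ) : ℝ :=
  (if s < k then depRate s n1 μ θ1 θ2 k - (s : ℝ) * μ else 0) +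
  (if k = s + n1 + n2 then lam else 0)

theorem Finset.sum_Icc_add_sum_Icc {M : Type*} [AddCommMonoid M] (f : ℕ → M) {a b c : ℕ}
    (hab : a ≤ b) (hbc : b ≤ c) :
    ∑ k ∈ Icc a b, f k + ∑ k ∈ Icc b c, f k = ∑ k ∈ Icc a c, f k + f b := by
  rw [← add_sum_Ioc_eq_sum_Icc hab, ← add_sum_Ioc_eq_sum_Icc hbc,
    ← add_sum_Ioc_eq_sum_Icc (hab.trans hbc), ← sum_Ioc_consecutive f hab hbc]
  abel

theorem sum_Ioc_sub_mul_add_eq_of_balance (lam c : ℝ) (π d : ℕ → ℝ) {s N : ℕ} (hsN : s ≤ N)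
    (hbal : ∀ k ∈ Ioc s N, π k * d k = π (k - 1) * lam) :
    ∑ k ∈ Ioc s N, (d k - c) * π k + lam * π N
      = (lam - c) * ∑ k ∈ Icc s N, π k + c * π s := by
  induction N, hsN using Nat.le_induction with
  | base =>
    simp only [Ioc_self, sum_empty, Icc_self, sum_singleton]
    ring
  | succ N hsN ih =>
    have hbalN : π (N + 1) * d (N + 1) = π N * lam := hbal (N + 1) (by simp only [mem_Ioc]; omega)
    have ih := ih fun k hk => hbal k (Ioc_subset_Ioc_right N.le_succ hk)
    rw [sum_Ioc_succ_top hsN, sum_Icc_succ_top (by omega)]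
    linear_combination ih + hbalN

theorem sum_abandonRate_mul (s n1 n2 : ℕ) (lam μ θ1 θ2 : ℝ) (π : ℕ → ℝ) :
    ∑ k ∈ Icc 0 (s + n1 + n2), abandonRate s n1 n2 lam μ θ1 θ2 k * π k
      = ∑ k ∈ Ioc s (s + n1 + n2), (depRate s n1 μ θ1 θ2 k - s * μ) * π k
        + lam * π (s + n1 + n2) := by
  have hfilter : (Icc 0 (s + n1 + n2)).filter (s < ·) = Ioc s (s + n1 + n2) := by
    ext k; simp only [mem_filter, mem_Icc, mem_Ioc]; omega
  simp only [abandonRate, add_mul, sum_add_distrib, ite_mul, zero_mul]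
  rw [← sum_filter, hfilter, sum_ite_eq', if_pos (by simp)]

theorem sum_abandonRate_mul_eq_of_balance (s n1 n2 : ℕ) (lam μ θ1 θ2 : ℝ) (π : ℕ → ℝ)
    (hbal : ∀ k, 1 ≤ k → k ≤ s + n1 + n2 →
      π k * depRate s n1 μ θ1 θ2 k = π (k - 1) * lam) :
    ∑ k ∈ Icc 0 (s + n1 + n2), abandonRate s n1 n2 lam μ θ1 θ2 k * π k
      = (lam - s * μ) * ∑ k ∈ Icc s (s + n1 + n2), π k + s * μ * π s := by
  rw [sum_abandonRate_mul]
  refine sum_Ioc_sub_mul_add_eq_of_balance _ _ _ _ (by omega) fun k hk => ?_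
  rw [mem_Ioc] at hk
  exact hbal k (by omega) hk.2

theorem stmt_5_general (lam μ θ1 θ2 : ℝ) (hlam : 0 < lam) (s n1 n2 : ℕ) (π : ℕ → ℝ)
    (hpos : ∀ k ∈ Finset.Icc 0 (s + n1 + n2), 0 < π k)
    (hbal : ∀ k, 1 ≤ k → k ≤ s + n1 + n2 →
      π k * depRate s n1 μ θ1 θ2 k = π (k - 1) * lam) :
    ((1 / lam) * ∑ k ∈ Finset.Icc 0 (s + n1 + n2), abandonRate s n1 n2 lam μ θ1 θ2 k * π k) / π s = (1 - (s : ℝ) * μ / lam) * (1 / (subProb π (Finset.Icc s (s + n1 + n2)) s) - 1) + 1 ∧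
    ((1 / lam) * ∑ k ∈ Finset.Icc 0 (s + n1 + n2), abandonRate s n1 n2 lam μ θ1 θ2 k * π k) / π s = (1 - (s : ℝ) * μ / lam) * ((1 / (subProb π (Finset.Icc s (s + n1)) s) - 1) + (subProb π (Finset.Icc s (s + n1)) (s + n1) / (subProb π (Finset.Icc s (s + n1)) s)) * (1 / (subProb π (Finset.Icc (s + n1) (s + n1 + n2)) (s + n1)) - 1)) + 1 := by
  have hπs : 0 < π s := hpos s (by simp only [mem_Icc]; omega)
  have hπm : 0 < π (s + n1) := hpos (s + n1) (by simp only [mem_Icc]; omega)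
  have hS1 : 0 < ∑ k ∈ Icc s (s + n1), π k :=
    sum_pos (fun k hk => hpos k (by simp only [mem_Icc] at hk ⊢; omega)) ⟨s, by simp⟩
  have hsplit := sum_Icc_add_sum_Icc π (Nat.le_add_right s n1) (Nat.le_add_right _ n2)
  have hPA : ((1 / lam) * ∑ k ∈ Icc 0 (s + n1 + n2), abandonRate s n1 n2 lam μ θ1 θ2 k * π k)
      / π s = (1 - s * μ / lam) * ((∑ k ∈ Icc s (s + n1 + n2), π k) / π s - 1) + 1 := by
    rw [sum_abandonRate_mul_eq_of_balance s n1 n2 lam μ θ1 θ2 π hbal]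
    field_simp
    ring
  refine ⟨by rw [hPA, subProb, one_div_div], ?_⟩
  rw [hPA]
  simp only [subProb, one_div_div]
  field_simp
  linear_combination (s * μ - lam) * hsplit

theorem stmt_5 (lam μ θ1 θ2 : ℝ) (hlam : 0 < lam) (hμ : 0 < μ)
    (hθ1 : 0 < θ1) (hθ2 : 0 < θ2) (s n1 n2 : ℕ) (hs : 1 ≤ s) (π : ℕ → ℝ)
    (hpos : ∀ k ∈ Finset.Icc 0 (s + n1 + n2), 0 < π k)
    (hbal : ∀ k, 1 ≤ k → k ≤ s + n1 + n2 →
      π k * depRate s n1 μ θ1 θ2 k = π (k - 1) * lam)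
    (hsum : ∑ k ∈ Finset.Icc 0 (s + n1 + n2), π k = 1) :
    ((1 / lam) * ∑ k ∈ Finset.Icc 0 (s + n1 + n2), abandonRate s n1 n2 lam μ θ1 θ2 k * π k) / π s = (1 - (s : ℝ) * μ / lam) * (1 / (subProb π (Finset.Icc s (s + n1 + n2)) s) - 1) + 1 ∧
    ((1 / lam) * ∑ k ∈ Finset.Icc 0 (s + n1 + n2), abandonRate s n1 n2 lam μ θ1 θ2 k * π k) / π s = (1 - (s : ℝ) * μ / lam) * ((1 / (subProb π (Finset.Icc s (s + n1)) s) - 1) + (subProb π (Finset.Icc s (s + n1)) (s + n1) / (subProb π (Finset.Icc s (s + n1)) s)) * (1 / (subProb π (Finset.Icc (s + n1) (s + n1 + n2)) (s + n1)) - 1)) + 1 :=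
  stmt_5_general lam μ θ1 θ2 hlam s n1 n2 π hpos hbal
end

section
/- The expected queue length satisfies L/π_s = (λ/θ1)·[ p·(1/π^1_s − 1) + 1 − r1 ] + r1·(λ/θ2)·[ (p + n1·(θ2 − θ1)/λ)·(1/π^2_{s+n1} − 1) + 1 − r2 ], where p = 1 − s·μ/λ. (Equation (7) of Proposition 2.) -/
open Finset

lemma key_sum (π : ℕ → ℝ) (a : ℕ) (c θ lam : ℝ) :
    ∀ m : ℕ, (∀ k, a + 1 ≤ k → k ≤ a + m →
        π k * (c + ((k : ℝ) - (a : ℝ)) * θ) = π (k - 1) * lam) →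
      θ * ∑ k ∈ Icc (a + 1) (a + m), ((k : ℝ) - (a : ℝ)) * π k
        = lam * ((∑ k ∈ Icc a (a + m), π k) - π (a + m))
          - c * ((∑ k ∈ Icc a (a + m), π k) - π a) := by
  intro m
  induction m with
  | zero => simp
  | succ n ih =>
    intro h
    have hn := ih (fun k hk1 hk2 => h k hk1 (by omega))
    have hnew := h (a + n + 1) (by omega) (by omega)
    have hstep : a + (n + 1) = (a + n) + 1 := by omega
    rw [hstep, Finset.sum_Icc_succ_top (by omega : a + 1 ≤ a + n + 1),
      Finset.sum_Icc_succ_top (by omega : a ≤ a + n + 1)]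
    have hidx : a + n + 1 - 1 = a + n := by omega
    rw [hidx] at hnew
    push_cast at hnew ⊢
    linear_combination hn + hnew

theorem stmt_6 (lam μ θ1 θ2 : ℝ) (hlam : 0 < lam) (hμ : 0 < μ)
    (hθ1 : 0 < θ1) (hθ2 : 0 < θ2) (s n1 n2 : ℕ) (hs : 1 ≤ s) (π : ℕ → ℝ)
    (hpos : ∀ k ∈ Finset.Icc 0 (s + n1 + n2), 0 < π k)
    (hbal : ∀ k, 1 ≤ k → k ≤ s + n1 + n2 →
      π k * depRate s n1 μ θ1 θ2 k = π (k - 1) * lam)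
    (hsum : ∑ k ∈ Finset.Icc 0 (s + n1 + n2), π k = 1) :
    (∑ k ∈ Finset.Icc 0 (s + n1 + n2), ((k - s : ℕ) : ℝ) * π k) / π s =
      lam / θ1 * ((1 - (s : ℝ) * μ / lam) * (1 / (subProb π (Finset.Icc s (s + n1)) s) - 1) + 1 - (subProb π (Finset.Icc s (s + n1)) (s + n1) / (subProb π (Finset.Icc s (s + n1)) s))) +
        (subProb π (Finset.Icc s (s + n1)) (s + n1) / (subProb π (Finset.Icc s (s + n1)) s)) * (lam / θ2) *
          (((1 - (s : ℝ) * μ / lam) + (n1 : ℝ) * (θ2 - θ1) / lam) * (1 / (subProb π (Finset.Icc (s + n1) (s + n1 + n2)) (s + n1)) - 1) + 1 - (subProb π (Finset.Icc (s + n1) (s + n1 + n2)) (s + n1 + n2) / (subProb π (Finset.Icc (s + n1) (s + n1 + n2)) (s + n1)))) := by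
  set N := s + n1 + n2 with hN
  -- positivity
  have hA : 0 < π s := hpos s (by simp only [Finset.mem_Icc]; omega)
  have hB : 0 < π (s + n1) := hpos (s + n1) (by simp only [Finset.mem_Icc]; omega)
  have hC : 0 < π (s + n1 + n2) := hpos (s + n1 + n2) (by simp only [Finset.mem_Icc]; omega)
  have hS1 : 0 < ∑ k ∈ Icc s (s + n1), π k := by
    apply Finset.sum_pos
    · intro k hk
      apply hpos
      simp only [Finset.mem_Icc] at hk ⊢
      omega
    · exact ⟨s, by simp⟩
  have hS2 : 0 < ∑ k ∈ Icc (s + n1) (s + n1 + n2), π k := by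
    apply Finset.sum_pos
    · intro k hk
      apply hpos
      simp only [Finset.mem_Icc] at hk ⊢
      omega
    · exact ⟨s + n1, by simp⟩
  -- key balance identities
  have key1 := key_sum π s ((s : ℝ) * μ) θ1 lam n1 (by
    intro k hk1 hk2
    have hb := hbal k (by omega) (by omega)
    rw [depRate, if_neg (by omega), if_pos (by omega)] at hb
    linear_combination hb)
  have key2 := key_sum π (s + n1) ((s : ℝ) * μ + (n1 : ℝ) * θ1) θ2 lam n2 (by
    intro k hk1 hk2
    have hb := hbal k (by omega) (by omega)
    rw [depRate, if_neg (by omega), if_neg (by omega)] at hb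
    push_cast at hb ⊢
    linear_combination hb)
  -- split the expected-queue-length sum
  have hsplit : (∑ k ∈ Finset.Icc 0 N, ((k - s : ℕ) : ℝ) * π k)
      = (∑ k ∈ Icc (s + 1) (s + n1), ((k : ℝ) - (s : ℝ)) * π k)
        + ∑ k ∈ Icc (s + n1 + 1) N, ((k : ℝ) - (s : ℝ)) * π k := by
    have h0 : (∑ k ∈ Finset.Icc 0 N, ((k - s : ℕ) : ℝ) * π k)
        = ∑ k ∈ Ioc 0 N, ((k - s : ℕ) : ℝ) * π k := by
      rw [Finset.Icc_eq_cons_Ioc (Nat.zero_le N), Finset.sum_cons]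
      simp
    have h1 : (∑ k ∈ Ioc 0 s, ((k - s : ℕ) : ℝ) * π k)
        + ∑ k ∈ Ioc s N, ((k - s : ℕ) : ℝ) * π k
        = ∑ k ∈ Ioc 0 N, ((k - s : ℕ) : ℝ) * π k :=
      Finset.sum_Ioc_consecutive _ (by omega) (by omega)
    have h2 : (∑ k ∈ Ioc s (s + n1), ((k - s : ℕ) : ℝ) * π k)
        + ∑ k ∈ Ioc (s + n1) N, ((k - s : ℕ) : ℝ) * π k
        = ∑ k ∈ Ioc s N, ((k - s : ℕ) : ℝ) * π k :=
      Finset.sum_Ioc_consecutive _ (by omega) (by omega)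
    have h3 : (∑ k ∈ Ioc 0 s, ((k - s : ℕ) : ℝ) * π k) = 0 := by
      apply Finset.sum_eq_zero
      intro k hk
      simp only [Finset.mem_Ioc] at hk
      have : k - s = 0 := by omega
      simp [this]
    have h4 : (∑ k ∈ Ioc s (s + n1), ((k - s : ℕ) : ℝ) * π k)
        = ∑ k ∈ Icc (s + 1) (s + n1), ((k : ℝ) - (s : ℝ)) * π k := by
      rw [← Finset.Icc_add_one_left_eq_Ioc]
      apply Finset.sum_congr rfl
      intro k hk
      simp only [Finset.mem_Icc] at hk
      have : ((k - s : ℕ) : ℝ) = (k : ℝ) - (s : ℝ) := by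
        have := Nat.cast_sub (by omega : s ≤ k) (R := ℝ)
        push_cast at this ⊢
        linarith
      rw [this]
    have h5 : (∑ k ∈ Ioc (s + n1) N, ((k - s : ℕ) : ℝ) * π k)
        = ∑ k ∈ Icc (s + n1 + 1) N, ((k : ℝ) - (s : ℝ)) * π k := by
      rw [← Finset.Icc_add_one_left_eq_Ioc]
      apply Finset.sum_congr rfl
      intro k hk
      simp only [Finset.mem_Icc] at hk
      have : ((k - s : ℕ) : ℝ) = (k : ℝ) - (s : ℝ) := by
        have := Nat.cast_sub (by omega : s ≤ k) (R := ℝ)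
        push_cast at this ⊢
        linarith
      rw [this]
    rw [h0, ← h1, h3, zero_add, ← h2, h4, h5]
  -- rewrite second sum: (k - s) = (k - (s+n1)) + n1
  have htail : (∑ k ∈ Icc (s + n1 + 1) N, ((k : ℝ) - (s : ℝ)) * π k)
      = (∑ k ∈ Icc (s + n1 + 1) N, ((k : ℝ) - ((s : ℝ) + (n1 : ℝ))) * π k)
        + (n1 : ℝ) * ∑ k ∈ Icc (s + n1 + 1) N, π k := by
    rw [Finset.mul_sum, ← Finset.sum_add_distrib]
    apply Finset.sum_congr rfl
    intro k _
    ring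
  have htailsum : (∑ k ∈ Icc (s + n1 + 1) N, π k)
      = (∑ k ∈ Icc (s + n1) (s + n1 + n2), π k) - π (s + n1) := by
    have : (∑ k ∈ Icc (s + n1) N, π k) = π (s + n1) + ∑ k ∈ Ioc (s + n1) N, π k := by
      rw [Finset.Icc_eq_cons_Ioc (by omega), Finset.sum_cons]
    rw [← Finset.Icc_add_one_left_eq_Ioc] at this
    rw [hN] at this ⊢
    linarith
  -- adjust key2's index set form
  have key2' : θ2 * ∑ k ∈ Icc (s + n1 + 1) N, ((k : ℝ) - ((s : ℝ) + (n1 : ℝ))) * π k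
      = lam * ((∑ k ∈ Icc (s + n1) (s + n1 + n2), π k) - π (s + n1 + n2))
        - ((s : ℝ) * μ + (n1 : ℝ) * θ1)
          * ((∑ k ∈ Icc (s + n1) (s + n1 + n2), π k) - π (s + n1)) := by
    have e1 : s + n1 + 1 = (s + n1) + 1 := by omega
    have e2 : N = (s + n1) + n2 := by omega
    rw [e2]
    push_cast at key2 ⊢
    convert key2 using 3
  -- assemble
  rw [hsplit, htail, htailsum]
  have hsub1 : subProb π (Finset.Icc s (s + n1)) s = π s / ∑ k ∈ Icc s (s + n1), π k := rfl
  have hsub2 : subProb π (Finset.Icc s (s + n1)) (s + n1)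
      = π (s + n1) / ∑ k ∈ Icc s (s + n1), π k := rfl
  have hsub3 : subProb π (Finset.Icc (s + n1) (s + n1 + n2)) (s + n1)
      = π (s + n1) / ∑ k ∈ Icc (s + n1) (s + n1 + n2), π k := rfl
  have hsub4 : subProb π (Finset.Icc (s + n1) (s + n1 + n2)) (s + n1 + n2)
      = π (s + n1 + n2) / ∑ k ∈ Icc (s + n1) (s + n1 + n2), π k := rfl
  rw [hsub1, hsub2, hsub3, hsub4]
  have hL1 : (∑ k ∈ Icc (s + 1) (s + n1), ((k : ℝ) - (s : ℝ)) * π k)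
      = (lam * ((∑ k ∈ Icc s (s + n1), π k) - π (s + n1))
        - (s : ℝ) * μ * ((∑ k ∈ Icc s (s + n1), π k) - π s)) / θ1 := by
    field_simp
    linear_combination key1
  have hT2 : (∑ k ∈ Icc (s + n1 + 1) N, ((k : ℝ) - ((s : ℝ) + (n1 : ℝ))) * π k)
      = (lam * ((∑ k ∈ Icc (s + n1) (s + n1 + n2), π k) - π (s + n1 + n2))
        - ((s : ℝ) * μ + (n1 : ℝ) * θ1)
          * ((∑ k ∈ Icc (s + n1) (s + n1 + n2), π k) - π (s + n1))) / θ2 := by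
    field_simp
    linear_combination key2'
  rw [hL1, hT2]
  field_simp
  ring
end

section
/- The abandonment probability is related to the queueing probability by the exact identity P_A = p·(P_Q − π_s) + π_s, where p = 1 − s·μ/λ. (Equation (9) of Corollary 1.) -/
open Finset

theorem stmt_7 (lam μ θ1 θ2 : ℝ) (hlam : 0 < lam) (hμ : 0 < μ)
    (hθ1 : 0 < θ1) (hθ2 : 0 < θ2) (s n1 n2 : ℕ) (hs : 1 ≤ s) (π : ℕ → ℝ)
    (hpos : ∀ k ∈ Finset.Icc 0 (s + n1 + n2), 0 < π k)
    (hbal : ∀ k, 1 ≤ k → k ≤ s + n1 + n2 →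
      π k * depRate s n1 μ θ1 θ2 k = π (k - 1) * lam)
    (hsum : ∑ k ∈ Finset.Icc 0 (s + n1 + n2), π k = 1) :
    ((1 / lam) * ∑ k ∈ Finset.Icc 0 (s + n1 + n2), abandonRate s n1 n2 lam μ θ1 θ2 k * π k) = (1 - (s : ℝ) * μ / lam) * ((∑ k ∈ Finset.Icc s (s + n1 + n2), π k) - π s) + π s := by
  set N := s + n1 + n2 with hN
  have hsN : s ≤ N := by omega
  have hN1 : 1 ≤ N := le_trans hs hsN
  -- blocking sum
  have hblock : ∑ k ∈ Finset.Icc 0 N, (if k = N then lam else 0) * π k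
      = lam * π N := by
    simp [ite_mul, Finset.sum_ite_eq]
  -- reneging sum restricted
  have hren : ∑ k ∈ Finset.Icc 0 N,
        (if s < k then depRate s n1 μ θ1 θ2 k - (s : ℝ) * μ else 0) * π k
      = ∑ k ∈ Finset.Icc (s+1) N, (depRate s n1 μ θ1 θ2 k - (s : ℝ) * μ) * π k := by
    have hsub : Finset.Icc (s+1) N ⊆ Finset.Icc 0 N :=
      Finset.Icc_subset_Icc (Nat.zero_le _) le_rfl
    have h0 : ∀ k ∈ Finset.Icc 0 N, k ∉ Finset.Icc (s+1) N →
        (if s < k then depRate s n1 μ θ1 θ2 k - (s : ℝ) * μ else 0) * π k = 0 := by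
      intro k hk hk'
      simp only [Finset.mem_Icc] at hk hk'
      rw [if_neg (by omega), zero_mul]
    rw [← Finset.sum_subset hsub h0]
    refine Finset.sum_congr rfl (fun k hk => ?_)
    simp only [Finset.mem_Icc] at hk
    rw [if_pos (by omega)]
  -- split the restricted sum
  have hsplit : ∑ k ∈ Finset.Icc (s+1) N, (depRate s n1 μ θ1 θ2 k - (s : ℝ) * μ) * π k
      = (∑ k ∈ Finset.Icc (s+1) N, π k * depRate s n1 μ θ1 θ2 k)
        - (s : ℝ) * μ * ∑ k ∈ Finset.Icc (s+1) N, π k := by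
    rw [Finset.mul_sum, ← Finset.sum_sub_distrib]
    exact Finset.sum_congr rfl (fun k _ => by ring)
  -- balance
  have hbal' : ∑ k ∈ Finset.Icc (s+1) N, π k * depRate s n1 μ θ1 θ2 k
      = lam * ∑ k ∈ Finset.Icc s (N-1), π k := by
    rw [Finset.sum_congr rfl (fun k hk => by
      simp only [Finset.mem_Icc] at hk
      exact hbal k (by omega) hk.2)]
    have hmap : Finset.Icc (s+1) N
        = Finset.map (addRightEmbedding 1) (Finset.Icc s (N-1)) := by
      rw [Finset.map_add_right_Icc]
      congr 1
      omega
    rw [hmap, Finset.sum_map, Finset.mul_sum]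
    refine Finset.sum_congr rfl (fun k _ => ?_)
    simp [addRightEmbedding, mul_comm]
  -- Q decompositions
  have hQ2 : ∑ k ∈ Finset.Icc s N, π k = (∑ k ∈ Finset.Icc s (N-1), π k) + π N := by
    have h : N - 1 + 1 = N := by omega
    calc ∑ k ∈ Finset.Icc s N, π k = ∑ k ∈ Finset.Icc s (N-1+1), π k := by rw [h]
      _ = (∑ k ∈ Finset.Icc s (N-1), π k) + π (N-1+1) :=
          Finset.sum_Icc_succ_top (by omega) _
      _ = _ := by rw [h]
  have hQ1 : ∑ k ∈ Finset.Icc s N, π k = π s + ∑ k ∈ Finset.Icc (s+1) N, π k := by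
    rw [Finset.Icc_eq_cons_Ioc hsN, Finset.sum_cons, Finset.Icc_add_one_left_eq_Ioc]
  -- assemble
  have hexp : ∑ k ∈ Finset.Icc 0 N, abandonRate s n1 n2 lam μ θ1 θ2 k * π k
      = lam * ((∑ k ∈ Finset.Icc s N, π k) - π N)
        - (s : ℝ) * μ * ((∑ k ∈ Finset.Icc s N, π k) - π s)
        + lam * π N := by
    unfold abandonRate
    rw [Finset.sum_congr rfl (fun k _ => add_mul _ _ _), Finset.sum_add_distrib,
      hblock, hren, hsplit, hbal']
    have h1 : ∑ k ∈ Finset.Icc s (N-1), π k = (∑ k ∈ Finset.Icc s N, π k) - π N := by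
      rw [hQ2]; ring
    have h2 : ∑ k ∈ Finset.Icc (s+1) N, π k = (∑ k ∈ Finset.Icc s N, π k) - π s := by
      rw [hQ1]; ring
    rw [h1, h2]
  rw [hexp]
  field_simp
  ring
end

section
/- If the two reneging rates coincide, θ1 = θ2 = θ, then the expected queue length is related to the queueing probability by the exact identity L = (λ/θ)·[ p·(P_Q − π_s) + π_s − π_{s+n1+n2} ], where p = 1 − s·μ/λ. (Equation (10) of Corollary 1.) -/
open Finset

lemma depRate_of_lt (s n1 : ℕ) (μ θ : ℝ) {k : ℕ} (hk : s < k) :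
    depRate s n1 μ θ θ k = s * μ + ((k - s : ℕ) : ℝ) * θ := by
  rw [Nat.cast_sub hk.le]
  unfold depRate
  rw [if_neg hk.not_ge]
  split_ifs <;> ring

lemma mul_sum_excess_eq_of_balance (s m : ℕ) {c θ lam : ℝ} {π : ℕ → ℝ}
    (hbal : ∀ k, s < k → k ≤ s + m → π k * (c + ((k - s : ℕ) : ℝ) * θ) = π (k - 1) * lam) :
    θ * ∑ k ∈ Icc s (s + m), ((k - s : ℕ) : ℝ) * π k
      = lam * ((∑ k ∈ Icc s (s + m), π k) - π (s + m))
        - c * ((∑ k ∈ Icc s (s + m), π k) - π s) := by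
  induction m with
  | zero => simp
  | succ m ih =>
    have ih := ih fun k h1 h2 => hbal k h1 (by omega)
    have hlast := hbal (s + m + 1) (by omega) (by omega)
    rw [Nat.add_sub_cancel, add_assoc, Nat.add_sub_cancel_left] at hlast
    rw [← add_assoc, sum_Icc_succ_top (by omega), sum_Icc_succ_top (by omega), add_assoc,
      Nat.add_sub_cancel_left]
    linear_combination ih + hlast

lemma sum_Icc_zero_excess_eq (s N : ℕ) (f : ℕ → ℝ) :
    ∑ k ∈ Icc 0 N, ((k - s : ℕ) : ℝ) * f k = ∑ k ∈ Icc s N, ((k - s : ℕ) : ℝ) * f k := by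
  refine (sum_subset (Icc_subset_Icc_left (Nat.zero_le s)) fun k hk hks => ?_).symm
  simp only [mem_Icc] at hk hks
  simp [Nat.sub_eq_zero_of_le (by omega : k ≤ s)]

theorem stmt_8_general (lam μ θ1 θ2 : ℝ) (hlam : 0 < lam)
    (hθ1 : 0 < θ1) (s n1 n2 : ℕ) (π : ℕ → ℝ)
    (hbal : ∀ k, 1 ≤ k → k ≤ s + n1 + n2 →
      π k * depRate s n1 μ θ1 θ2 k = π (k - 1) * lam)
    (θ : ℝ) (hθa : θ1 = θ) (hθb : θ2 = θ) :
    (∑ k ∈ Finset.Icc 0 (s + n1 + n2), ((k - s : ℕ) : ℝ) * π k) = lam / θ * ((1 - (s : ℝ) * μ / lam) * ((∑ k ∈ Finset.Icc s (s + n1 + n2), π k) - π s) + π s - π (s + n1 + n2)) := by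
  subst θ1 θ2
  have key := mul_sum_excess_eq_of_balance s (n1 + n2) (c := s * μ) fun k hsk hk =>
    depRate_of_lt s n1 μ θ hsk ▸ hbal k (by omega) (by omega)
  rw [← add_assoc] at key
  rw [sum_Icc_zero_excess_eq]
  field_simp
  linear_combination key

theorem stmt_8 (lam μ θ1 θ2 : ℝ) (hlam : 0 < lam) (hμ : 0 < μ)
    (hθ1 : 0 < θ1) (hθ2 : 0 < θ2) (s n1 n2 : ℕ) (hs : 1 ≤ s) (π : ℕ → ℝ)
    (hpos : ∀ k ∈ Finset.Icc 0 (s + n1 + n2), 0 < π k)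
    (hbal : ∀ k, 1 ≤ k → k ≤ s + n1 + n2 →
      π k * depRate s n1 μ θ1 θ2 k = π (k - 1) * lam)
    (hsum : ∑ k ∈ Finset.Icc 0 (s + n1 + n2), π k = 1)
    (θ : ℝ) (hθa : θ1 = θ) (hθb : θ2 = θ) :
    (∑ k ∈ Finset.Icc 0 (s + n1 + n2), ((k - s : ℕ) : ℝ) * π k) = lam / θ * ((1 - (s : ℝ) * μ / lam) * ((∑ k ∈ Finset.Icc s (s + n1 + n2), π k) - π s) + π s - π (s + n1 + n2)) :=
  stmt_8_general lam μ θ1 θ2 hlam hθ1 s n1 n2 π hbal θ hθa hθb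
end

section
/- The subchain-1 stationary probability of state s satisfies the exact formula 1/π^1_s = Σ_{k=0}^{n1} Π_{j=1}^{k} λ/(s·μ + j·θ1), where the empty product (k = 0) equals 1. (Second formula of equation (7)/(exact).) -/
open Finset

theorem stmt_10 (lam μ θ1 θ2 : ℝ) (hlam : 0 < lam) (hμ : 0 < μ)
    (hθ1 : 0 < θ1) (hθ2 : 0 < θ2) (s n1 n2 : ℕ) (hs : 1 ≤ s) (π : ℕ → ℝ)
    (hpos : ∀ k ∈ Finset.Icc 0 (s + n1 + n2), 0 < π k)
    (hbal : ∀ k, 1 ≤ k → k ≤ s + n1 + n2 →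
      π k * depRate s n1 μ θ1 θ2 k = π (k - 1) * lam)
    (hsum : ∑ k ∈ Finset.Icc 0 (s + n1 + n2), π k = 1) :
    1 / (subProb π (Finset.Icc s (s + n1)) s) =
      ∑ k ∈ Finset.range (n1 + 1), ∏ j ∈ Finset.Icc 1 k, lam / ((s : ℝ) * μ + (j : ℝ) * θ1) := by
  have hπs : π s ≠ 0 := by
    have := hpos s (Finset.mem_Icc.mpr ⟨Nat.zero_le _, by omega⟩)
    linarith
  -- key: π (s+k) = π s * ∏_{j=1}^k lam/(sμ+jθ1) for k ≤ n1
  have key : ∀ k, k ≤ n1 → π (s + k) =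
      π s * ∏ j ∈ Finset.Icc 1 k, lam / ((s : ℝ) * μ + (j : ℝ) * θ1) := by
    intro k
    induction k with
    | zero => simp
    | succ k ih =>
      intro hk
      have hk' : k ≤ n1 := Nat.le_of_succ_le hk
      have hd : depRate s n1 μ θ1 θ2 (s + (k + 1)) = (s : ℝ) * μ + ((k : ℝ) + 1) * θ1 := by
        unfold depRate
        rw [if_neg (by omega), if_pos (by omega)]
        push_cast
        ring
      have hpos' : (0 : ℝ) < (s : ℝ) * μ + ((k : ℝ) + 1) * θ1 := by
        have : (0:ℝ) ≤ (s:ℝ) * μ := by positivity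
        nlinarith [hθ1]
      have hb := hbal (s + (k + 1)) (by omega) (by omega)
      rw [hd] at hb
      have hprev : s + (k + 1) - 1 = s + k := by omega
      rw [hprev, ih hk'] at hb
      have h2 := eq_div_of_mul_eq hpos'.ne' hb
      rw [h2, Finset.prod_Icc_succ_top (by omega : 1 ≤ k + 1)]
      push_cast
      ring
  have hsumA : ∑ k' ∈ Finset.Icc s (s + n1), π k' =
      π s * ∑ k ∈ Finset.range (n1 + 1), ∏ j ∈ Finset.Icc 1 k, lam / ((s : ℝ) * μ + (j : ℝ) * θ1) := by
    rw [Finset.mul_sum]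
    rw [show Finset.Icc s (s + n1) = Finset.map ⟨fun k => s + k, add_right_injective s⟩ (Finset.range (n1+1)) from ?_]
    · rw [Finset.sum_map]
      refine Finset.sum_congr rfl fun k hk => ?_
      simp only [Function.Embedding.coeFn_mk]
      exact key k (by simpa [Nat.lt_succ_iff] using hk)
    · ext x
      simp only [Finset.mem_Icc, Finset.mem_map, Finset.mem_range, Nat.lt_succ_iff,
        Function.Embedding.coeFn_mk]
      constructor
      · rintro ⟨h1, h2⟩
        exact ⟨x - s, by omega, by omega⟩
      · rintro ⟨a, ha, rfl⟩
        omega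
  rw [subProb, one_div_div, hsumA, mul_comm, mul_div_assoc, div_self hπs, mul_one]
end

section
/- The subchain-2 stationary probability of state s+n1 satisfies the exact formula 1/π^2_{s+n1} = Σ_{k=0}^{n2} Π_{j=1}^{k} λ/(s·μ + n1·θ1 + j·θ2), where the empty product (k = 0) equals 1. (Third formula of equation (7)/(exact).) -/
/-! The balance equations of a birth-death chain determine the stationary weights up to a
common factor: on the last block `s + n1, …, s + n1 + n2` each weight is `π (s + n1)` times a
product of ratios `λ / μ_k`. Summing over the block and dividing by `π (s + n1)` gives the
formula. The departure rates never vanish there, because a vanishing rate would force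
`π (k - 1) * λ = 0`. -/

open Finset

lemma depRate_add_add {s n1 j : ℕ} (μ θ1 θ2 : ℝ) (hj : 0 < j) :
    depRate s n1 μ θ1 θ2 (s + n1 + j) = s * μ + n1 * θ1 + j * θ2 := by
  rw [depRate, if_neg (by omega), if_neg (by omega)]
  push_cast
  ring

lemma eq_mul_div_of_mul_eq_mul {x y d lam : ℝ} (hy : y ≠ 0) (hlam : lam ≠ 0)
    (h : x * d = y * lam) : x = y * (lam / d) := by
  have hd : d ≠ 0 := by
    rintro rfl
    simp_all
  field_simp
  exact h

lemma eq_mul_prod_of_balance {π d : ℕ → ℝ} {lam : ℝ} {a n : ℕ} (hlam : lam ≠ 0)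
    (hπ : ∀ k ≤ n, π (a + k) ≠ 0)
    (hbal : ∀ k < n, π (a + (k + 1)) * d (a + (k + 1)) = π (a + k) * lam) :
    ∀ k ≤ n, π (a + k) = π a * ∏ j ∈ Icc 1 k, lam / d (a + j) := by
  intro k hk
  induction k with
  | zero => simp
  | succ k ih =>
    rw [eq_mul_div_of_mul_eq_mul (hπ k (by omega)) hlam (hbal k hk), ih (by omega),
      prod_Icc_succ_top (by omega), mul_assoc]

lemma sum_Icc_eq_mul_sum_prod {π d : ℕ → ℝ} {lam : ℝ} {a n : ℕ} (hlam : lam ≠ 0)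
    (hπ : ∀ k ≤ n, π (a + k) ≠ 0)
    (hbal : ∀ k < n, π (a + (k + 1)) * d (a + (k + 1)) = π (a + k) * lam) :
    ∑ k ∈ Icc a (a + n), π k = π a * ∑ k ∈ range (n + 1), ∏ j ∈ Icc 1 k, lam / d (a + j) := by
  rw [← Ico_add_one_right_eq_Icc, sum_Ico_eq_sum_range, show a + n + 1 - a = n + 1 by omega,
    mul_sum]
  exact sum_congr rfl fun k hk ↦
    eq_mul_prod_of_balance hlam hπ hbal k (Nat.lt_succ_iff.mp (mem_range.mp hk))

theorem stmt_11_general (lam μ θ1 θ2 : ℝ) (hlam : 0 < lam) (s n1 n2 : ℕ) (π : ℕ → ℝ)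
    (hpos : ∀ k ∈ Finset.Icc 0 (s + n1 + n2), 0 < π k)
    (hbal : ∀ k, 1 ≤ k → k ≤ s + n1 + n2 →
      π k * depRate s n1 μ θ1 θ2 k = π (k - 1) * lam) :
    1 / (subProb π (Finset.Icc (s + n1) (s + n1 + n2)) (s + n1)) =
      ∑ k ∈ Finset.range (n2 + 1),
        ∏ j ∈ Finset.Icc 1 k, lam / ((s : ℝ) * μ + (n1 : ℝ) * θ1 + (j : ℝ) * θ2) := by
  have hπ : ∀ k ≤ n2, π (s + n1 + k) ≠ 0 := fun k hk ↦
    (hpos _ (mem_Icc.mpr ⟨Nat.zero_le _, by omega⟩)).ne'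
  have hblock : ∀ k < n2, π (s + n1 + (k + 1)) * depRate s n1 μ θ1 θ2 (s + n1 + (k + 1)) =
      π (s + n1 + k) * lam := fun k hk ↦ hbal _ (by omega) (by omega)
  have hblockSum := sum_Icc_eq_mul_sum_prod hlam.ne' hπ hblock
  have hrates : ∀ k ∈ range (n2 + 1), ∏ j ∈ Icc 1 k, lam / depRate s n1 μ θ1 θ2 (s + n1 + j) =
      ∏ j ∈ Icc 1 k, lam / ((s : ℝ) * μ + (n1 : ℝ) * θ1 + (j : ℝ) * θ2) := fun k _ ↦
    prod_congr rfl fun j hj ↦ by rw [depRate_add_add μ θ1 θ2 (mem_Icc.mp hj).1]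
  have hbase : π (s + n1) ≠ 0 := hπ 0 n2.zero_le
  rw [subProb, one_div_div, hblockSum, mul_div_cancel_left₀ _ hbase, sum_congr rfl hrates]

theorem stmt_11 (lam μ θ1 θ2 : ℝ) (hlam : 0 < lam) (hμ : 0 < μ)
    (hθ1 : 0 < θ1) (hθ2 : 0 < θ2) (s n1 n2 : ℕ) (hs : 1 ≤ s) (π : ℕ → ℝ)
    (hpos : ∀ k ∈ Finset.Icc 0 (s + n1 + n2), 0 < π k)
    (hbal : ∀ k, 1 ≤ k → k ≤ s + n1 + n2 →
      π k * depRate s n1 μ θ1 θ2 k = π (k - 1) * lam)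
    (hsum : ∑ k ∈ Finset.Icc 0 (s + n1 + n2), π k = 1) :
    1 / (subProb π (Finset.Icc (s + n1) (s + n1 + n2)) (s + n1)) =
      ∑ k ∈ Finset.range (n2 + 1),
        ∏ j ∈ Finset.Icc 1 k, lam / ((s : ℝ) * μ + (n1 : ℝ) * θ1 + (j : ℝ) * θ2) :=
  stmt_11_general lam μ θ1 θ2 hlam s n1 n2 π hpos hbal
end

section
/- For all real numbers a > 0, θ > 0, and λ ≥ 0, the series Σ_{k=0}^{∞} Π_{j=1}^{k} λ/(a + j·θ) (with empty product equal to 1) converges, and its sum equals (a/θ)·∫_{0}^{1} e^{λ t/θ} (1−t)^{a/θ − 1} dt. (Integral representation used in equation (8) for the infinite-capacity reneging queue; in particular it gives 1/π^1_s with a = s·μ, θ = θ1 when n1 = ∞, and 1/π^2_{s+n1} with a = s·μ + n1·θ1, θ = θ2 when n2 = ∞.) -/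
/-!
With `α = a/θ` and `c = λ/θ` the `k`-th term is `c^k / ((α+1)⋯(α+k))`. The Beta integral
`∫₀¹ t^k (1-t)^(α-1) dt = k! / (α(α+1)⋯(α+k))` turns it into `α c^k/k! ∫₀¹ t^k (1-t)^(α-1) dt`,
and summing the exponential series under the integral gives `α ∫₀¹ e^{ct} (1-t)^(α-1) dt`.
The interchange is justified because the integrals of the absolute values are bounded by
`|c|^k/k!` times the finite integral of `(1-t)^(α-1)`.
-/

open MeasureTheory Set Finset Nat

theorem prod_range_succ_eq_mul_prod_Icc (α : ℝ) (k : ℕ) :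
    ∏ j ∈ range (k + 1), (α + j) = α * ∏ j ∈ Icc 1 k, (α + j) := by
  induction k with
  | zero => simp
  | succ k ih =>
    rw [prod_range_succ, ih, prod_Icc_succ_top (by omega)]
    push_cast
    ring

theorem integral_Ioo_pow_mul_one_sub_rpow {α : ℝ} (hα : 0 < α) (k : ℕ) :
    ∫ t in Ioo (0 : ℝ) 1, t ^ k * (1 - t) ^ (α - 1) =
      k ! / (α * ∏ j ∈ Icc 1 k, (α + j)) := by
  have hbeta : Complex.betaIntegral α (k + 1) = k ! / ∏ j ∈ range (k + 1), ((α : ℂ) + j) :=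
    Complex.betaIntegral_eval_nat_add_one_right (by simpa using hα) k
  rw [Complex.betaIntegral_symm, Complex.betaIntegral,
    intervalIntegral.integral_congr (g := fun t : ℝ => ((t ^ k * (1 - t) ^ (α - 1) : ℝ) : ℂ)),
    intervalIntegral.integral_ofReal, intervalIntegral.integral_of_le zero_le_one,
    integral_Ioc_eq_integral_Ioo] at hbeta
  · rw [← prod_range_succ_eq_mul_prod_Icc]
    exact_mod_cast hbeta
  · intro t ht
    rw [Set.uIcc_of_le zero_le_one] at ht
    simp only [add_sub_cancel_right, Complex.cpow_natCast]
    rw [Complex.ofReal_mul, Complex.ofReal_pow, Complex.ofReal_cpow (by linarith [ht.2])]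
    push_cast
    rfl

theorem integrableOn_Ioo_pow_mul_one_sub_rpow {α : ℝ} (hα : 0 < α) (k : ℕ) :
    IntegrableOn (fun t : ℝ => t ^ k * (1 - t) ^ (α - 1)) (Ioo 0 1) := by
  have hrpow : IntegrableOn (fun t : ℝ => (1 - t) ^ (α - 1)) (Ioo 0 1) := by
    have := (intervalIntegral.intervalIntegrable_rpow' (a := 1) (b := 0) (r := α - 1)
      (by linarith)).comp_sub_left 1
    rwa [sub_self, sub_zero, intervalIntegrable_iff_integrableOn_Ioo_of_le zero_le_one] at this
  exact hrpow.continuousOn_mul_of_subset (continuousOn_pow k) isCompact_Icc measurableSet_Ioo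
    Ioo_subset_Icc_self

theorem hasSum_pow_div_prod_Icc {α : ℝ} (hα : 0 < α) (c : ℝ) :
    HasSum (fun k : ℕ => c ^ k / ∏ j ∈ Icc 1 k, (α + j))
      (α * ∫ t in Ioo (0 : ℝ) 1, Real.exp (c * t) * (1 - t) ^ (α - 1)) := by
  set F : ℕ → ℝ → ℝ := fun k t => c ^ k / k ! * (t ^ k * (1 - t) ^ (α - 1)) with hF
  have hF_int (k : ℕ) : IntegrableOn (F k) (Ioo 0 1) :=
    (integrableOn_Ioo_pow_mul_one_sub_rpow hα k).const_mul _
  have hF_norm_le (k : ℕ) : ∫ t in Ioo (0 : ℝ) 1, ‖F k t‖ ≤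
      |c| ^ k / k ! * ∫ t in Ioo (0 : ℝ) 1, t ^ 0 * (1 - t) ^ (α - 1) := by
    rw [← integral_const_mul]
    refine setIntegral_mono_on (hF_int k).norm
      ((integrableOn_Ioo_pow_mul_one_sub_rpow hα 0).const_mul _) measurableSet_Ioo fun t ht => ?_
    have hg : 0 ≤ (1 - t) ^ (α - 1) := Real.rpow_nonneg (by linarith [ht.2]) _
    rw [hF, norm_mul, norm_mul, norm_div, norm_pow, Real.norm_natCast, Real.norm_eq_abs,
      Real.norm_of_nonneg (pow_nonneg ht.1.le k), Real.norm_of_nonneg hg, pow_zero, one_mul]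
    gcongr
    exact mul_le_of_le_one_left hg (pow_le_one₀ ht.1.le ht.2.le)
  have hF_summable : Summable fun k => ∫ t in Ioo (0 : ℝ) 1, ‖F k t‖ :=
    .of_nonneg_of_le (fun k => integral_nonneg fun t => norm_nonneg _) hF_norm_le
      ((Real.summable_pow_div_factorial |c|).mul_right _)
  have hF_tsum (t : ℝ) : ∑' k, F k t = Real.exp (c * t) * (1 - t) ^ (α - 1) := by
    have hexp := (NormedSpace.expSeries_div_hasSum_exp (c * t)).mul_right ((1 - t) ^ (α - 1))
    rw [← Real.exp_eq_exp_ℝ] at hexp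
    rw [← hexp.tsum_eq]
    exact tsum_congr fun k => by rw [hF, mul_pow]; ring
  have hF_integral (k : ℕ) : α * ∫ t in Ioo (0 : ℝ) 1, F k t = c ^ k / ∏ j ∈ Icc 1 k, (α + j) := by
    rw [hF, integral_const_mul, integral_Ioo_pow_mul_one_sub_rpow hα]
    field_simp
  simpa only [hF_integral, hF_tsum] using
    (hasSum_integral_of_summable_integral_norm hF_int hF_summable).mul_left α

theorem prod_Icc_div_add_mul (a θ lam : ℝ) (hθ : θ ≠ 0) (k : ℕ) :
    ∏ j ∈ Icc 1 k, lam / (a + j * θ) = (lam / θ) ^ k / ∏ j ∈ Icc 1 k, (a / θ + j) := by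
  have hpow : (lam / θ) ^ k = ∏ _j ∈ Icc 1 k, lam / θ := by
    rw [prod_const, Nat.card_Icc, Nat.add_sub_cancel]
  rw [hpow, ← prod_div_distrib]
  refine prod_congr rfl fun j _ => ?_
  rw [div_add' _ _ _ hθ, div_div_div_cancel_right₀ hθ]

theorem stmt_12_general (a θ lam : ℝ) (ha : 0 < a) (hθ : 0 < θ) :
    HasSum (fun k : ℕ => ∏ j ∈ Finset.Icc 1 k, lam / (a + (j : ℝ) * θ))
      (a / θ * ∫ t in Set.Ioo (0 : ℝ) 1, Real.exp (lam * t / θ) * (1 - t) ^ (a / θ - 1)) := by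
  simp_rw [prod_Icc_div_add_mul a θ lam hθ.ne', mul_div_right_comm lam]
  exact hasSum_pow_div_prod_Icc (div_pos ha hθ) (lam / θ)

theorem stmt_12 (a θ lam : ℝ) (ha : 0 < a) (hθ : 0 < θ) (hlam : 0 ≤ lam) :
    HasSum (fun k : ℕ => ∏ j ∈ Finset.Icc 1 k, lam / (a + (j : ℝ) * θ))
      (a / θ * ∫ t in Set.Ioo (0 : ℝ) 1, Real.exp (lam * t / θ) * (1 - t) ^ (a / θ - 1)) :=
  stmt_12_general a θ lam ha hθ
end

section
/- The expected queue length restricted to subchain 1, L^1 = Σ_{k=0}^{n1} k·π^1_{s+k}, satisfies the exact identity L^1/π^1_s = (λ/θ1)·[ p·(1/π^1_s − 1) + 1 − r1 ], where p = 1 − s·μ/λ. (Formula for L^1 established in the proof of Proposition 2.) -/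
open Finset

/-!
On subchain 1 the departure rate in state `s + j` is `s μ + j θ1`, linear in `j`. Summing the
balance equations `a_j (c + j d) = λ a_{j-1}` over `1 ≤ j ≤ n1` gives
`c (S - a_0) + d ∑ j a_j = λ (S - a_{n1})` with `S = ∑ a_j`, so the first moment of `a` is
expressed through `S`, `a_0` and `a_{n1}`; dividing by `S` and then by `a_0 / S` is the identity.
-/

lemma depRate_add_of_le (s n1 : ℕ) (μ θ1 θ2 : ℝ) {j : ℕ} (hj : j ≤ n1) :
    depRate s n1 μ θ1 θ2 (s + j) = s * μ + j * θ1 := by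
  rcases Nat.eq_zero_or_pos j with rfl | hj₀
  · simp [depRate]
  · rw [depRate, if_neg (by omega), if_pos (by omega)]
    push_cast
    ring

lemma first_moment_of_linear_balance (lam c d : ℝ) (a : ℕ → ℝ) (n : ℕ)
    (hbal : ∀ j, 1 ≤ j → j ≤ n → a j * (c + j * d) = a (j - 1) * lam) :
    d * ∑ j ∈ range (n + 1), (j : ℝ) * a j =
      lam * (∑ j ∈ range (n + 1), a j - a n) - c * (∑ j ∈ range (n + 1), a j - a 0) := by
  induction n with
  | zero => simp
  | succ n ih =>
    have hprev := ih fun j hj hjn => hbal j hj (by omega)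
    have hlast := hbal (n + 1) (by omega) le_rfl
    rw [Nat.add_sub_cancel] at hlast
    simp only [sum_range_succ] at hprev ⊢
    push_cast at hlast ⊢
    linear_combination hprev + hlast

theorem stmt_13_general (lam μ θ1 θ2 : ℝ) (hlam : 0 < lam)
    (hθ1 : 0 < θ1) (s n1 n2 : ℕ) (π : ℕ → ℝ)
    (hpos : ∀ k ∈ Finset.Icc 0 (s + n1 + n2), 0 < π k)
    (hbal : ∀ k, 1 ≤ k → k ≤ s + n1 + n2 →
      π k * depRate s n1 μ θ1 θ2 k = π (k - 1) * lam) :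
    (∑ k ∈ Finset.range (n1 + 1), (k : ℝ) * subProb π (Finset.Icc s (s + n1)) (s + k)) / (subProb π (Finset.Icc s (s + n1)) s) =
      lam / θ1 * ((1 - (s : ℝ) * μ / lam) * (1 / (subProb π (Finset.Icc s (s + n1)) s) - 1) + 1 - (subProb π (Finset.Icc s (s + n1)) (s + n1) / (subProb π (Finset.Icc s (s + n1)) s))) := by
  have hmoment := first_moment_of_linear_balance lam (s * μ) θ1 (fun j => π (s + j)) n1
    fun j hj hjn => by
      rw [← depRate_add_of_le s n1 μ θ1 θ2 hjn, show s + (j - 1) = s + j - 1 by omega]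
      exact hbal (s + j) (by omega) (by omega)
  have hS : ∑ k ∈ Icc s (s + n1), π k = ∑ j ∈ range (n1 + 1), π (s + j) := by
    rw [← Ico_add_one_right_eq_Icc, sum_Ico_eq_sum_range, show s + n1 + 1 - s = n1 + 1 by omega]
  have hπs : 0 < π s := hpos s (by simp; omega)
  have hSpos : 0 < ∑ j ∈ range (n1 + 1), π (s + j) :=
    sum_pos (fun j hj => hpos (s + j) (by simp at hj ⊢; omega)) nonempty_range_add_one
  simp only [subProb, hS, ← sum_div, mul_div_assoc']
  field_simp
  linear_combination hmoment

theorem stmt_13 (lam μ θ1 θ2 : ℝ) (hlam : 0 < lam) (hμ : 0 < μ)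
    (hθ1 : 0 < θ1) (hθ2 : 0 < θ2) (s n1 n2 : ℕ) (hs : 1 ≤ s) (π : ℕ → ℝ)
    (hpos : ∀ k ∈ Finset.Icc 0 (s + n1 + n2), 0 < π k)
    (hbal : ∀ k, 1 ≤ k → k ≤ s + n1 + n2 →
      π k * depRate s n1 μ θ1 θ2 k = π (k - 1) * lam)
    (hsum : ∑ k ∈ Finset.Icc 0 (s + n1 + n2), π k = 1) :
    (∑ k ∈ Finset.range (n1 + 1), (k : ℝ) * subProb π (Finset.Icc s (s + n1)) (s + k)) / (subProb π (Finset.Icc s (s + n1)) s) =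
      lam / θ1 * ((1 - (s : ℝ) * μ / lam) * (1 / (subProb π (Finset.Icc s (s + n1)) s) - 1) + 1 - (subProb π (Finset.Icc s (s + n1)) (s + n1) / (subProb π (Finset.Icc s (s + n1)) s))) :=
  stmt_13_general lam μ θ1 θ2 hlam hθ1 s n1 n2 π hpos hbal
end

section
/- The expected queue length restricted to subchain 2, L^2 = Σ_{k=0}^{n2} (n1+k)·π^2_{s+n1+k}, satisfies the exact identity L^2/π^2_{s+n1} − n1 = (λ/θ2)·[ (p + n1·(θ2 − θ1)/λ)·(1/π^2_{s+n1} − 1) + 1 − r2 ], where p = 1 − s·μ/λ. (Formula for L^2 established in the proof of Proposition 2.) -/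
open Finset

/-!
On subchain 2 the departure rate from state `s + n1 + k` is `c + k θ2` with `c = s μ + n1 θ1`,
so with `f k = π (s + n1 + k)` the balance equations read `f (k+1) (c + (k+1) θ2) = λ f k`.
Summing them over `k < n2` telescopes into `θ2 Σ k f k = λ (Σ f - f n2) - c (Σ f - f 0)`,
and the identity is this first-moment relation divided by `f 0`.
-/

theorem depRate_add_add_succ (s n1 : ℕ) (μ θ1 θ2 : ℝ) (k : ℕ) :
    depRate s n1 μ θ1 θ2 (s + n1 + (k + 1)) = s * μ + n1 * θ1 + (k + 1) * θ2 := by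
  rw [depRate, if_neg (by omega), if_neg (by omega)]
  push_cast
  ring

theorem subProb_Icc_add (π : ℕ → ℝ) (a n k : ℕ) :
    subProb π (Icc a (a + n)) k = π k / ∑ j ∈ range (n + 1), π (a + j) := by
  rw [subProb, ← Ico_add_one_right_eq_Icc, sum_Ico_eq_sum_range,
    show a + n + 1 - a = n + 1 by omega]

theorem mul_sum_range_natCast_mul_of_balance {f : ℕ → ℝ} {lam c θ : ℝ} {n : ℕ}
    (hbal : ∀ k < n, f (k + 1) * (c + (k + 1) * θ) = f k * lam) :
    θ * ∑ k ∈ range (n + 1), (k : ℝ) * f k =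
      lam * (∑ k ∈ range (n + 1), f k - f n) - c * (∑ k ∈ range (n + 1), f k - f 0) := by
  induction n with
  | zero => simp
  | succ n ih =>
    rw [sum_range_succ, sum_range_succ f]
    push_cast
    linear_combination ih (fun k hk => hbal k (by omega)) + hbal n (by omega)

theorem stmt_14_general (lam μ θ1 θ2 : ℝ) (hlam : 0 < lam) (hθ2 : 0 < θ2) (s n1 n2 : ℕ) (π : ℕ → ℝ)
    (hpos : ∀ k ∈ Finset.Icc 0 (s + n1 + n2), 0 < π k)
    (hbal : ∀ k, 1 ≤ k → k ≤ s + n1 + n2 →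
      π k * depRate s n1 μ θ1 θ2 k = π (k - 1) * lam) :
    (∑ k ∈ Finset.range (n2 + 1), ((n1 : ℝ) + (k : ℝ)) * subProb π (Finset.Icc (s + n1) (s + n1 + n2)) (s + n1 + k)) / (subProb π (Finset.Icc (s + n1) (s + n1 + n2)) (s + n1)) - (n1 : ℝ) =
      lam / θ2 * (((1 - (s : ℝ) * μ / lam) + (n1 : ℝ) * (θ2 - θ1) / lam) * (1 / (subProb π (Finset.Icc (s + n1) (s + n1 + n2)) (s + n1)) - 1) + 1 - (subProb π (Finset.Icc (s + n1) (s + n1 + n2)) (s + n1 + n2) / (subProb π (Finset.Icc (s + n1) (s + n1 + n2)) (s + n1)))) := by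
  have hπpos : ∀ k ≤ n2, 0 < π (s + n1 + k) := fun k hk => hpos _ (by simp; omega)
  have hmoment := mul_sum_range_natCast_mul_of_balance (f := fun k => π (s + n1 + k)) (n := n2)
    (c := s * μ + n1 * θ1) (θ := θ2) fun k hk => by
      simpa [depRate_add_add_succ] using hbal (s + n1 + (k + 1)) (by omega) (by omega)
  have hπ0 : π (s + n1) ≠ 0 := (hπpos 0 (Nat.zero_le _)).ne'
  have hT : ∑ k ∈ range (n2 + 1), π (s + n1 + k) ≠ 0 :=
    (sum_pos (fun k hk => hπpos k (Nat.lt_succ_iff.mp (mem_range.mp hk))) nonempty_range_add_one).ne'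
  simp only [subProb_Icc_add, mul_div_assoc', ← sum_div, add_mul, sum_add_distrib, ← mul_sum]
  field_simp
  linear_combination hmoment

theorem stmt_14 (lam μ θ1 θ2 : ℝ) (hlam : 0 < lam) (hμ : 0 < μ)
    (hθ1 : 0 < θ1) (hθ2 : 0 < θ2) (s n1 n2 : ℕ) (hs : 1 ≤ s) (π : ℕ → ℝ)
    (hpos : ∀ k ∈ Finset.Icc 0 (s + n1 + n2), 0 < π k)
    (hbal : ∀ k, 1 ≤ k → k ≤ s + n1 + n2 →
      π k * depRate s n1 μ θ1 θ2 k = π (k - 1) * lam)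
    (hsum : ∑ k ∈ Finset.Icc 0 (s + n1 + n2), π k = 1) :
    (∑ k ∈ Finset.range (n2 + 1), ((n1 : ℝ) + (k : ℝ)) * subProb π (Finset.Icc (s + n1) (s + n1 + n2)) (s + n1 + k)) / (subProb π (Finset.Icc (s + n1) (s + n1 + n2)) (s + n1)) - (n1 : ℝ) =
      lam / θ2 * (((1 - (s : ℝ) * μ / lam) + (n1 : ℝ) * (θ2 - θ1) / lam) * (1 / (subProb π (Finset.Icc (s + n1) (s + n1 + n2)) (s + n1)) - 1) + 1 - (subProb π (Finset.Icc (s + n1) (s + n1 + n2)) (s + n1 + n2) / (subProb π (Finset.Icc (s + n1) (s + n1 + n2)) (s + n1)))) :=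
  stmt_14_general lam μ θ1 θ2 hlam hθ2 s n1 n2 π hpos hbal
end

section
/- Flow conservation for subchain 1: λ·(1 − π^1_{s+n1}) = s·μ·(1 − π^1_s) + θ1·L^1, where L^1 = Σ_{k=0}^{n1} k·π^1_{s+k}. (Flow conservation law used in the proof of Proposition 2.) -/
open Finset

theorem stmt_15 (lam μ θ1 θ2 : ℝ) (hlam : 0 < lam) (hμ : 0 < μ)
    (hθ1 : 0 < θ1) (hθ2 : 0 < θ2) (s n1 n2 : ℕ) (hs : 1 ≤ s) (π : ℕ → ℝ)
    (hpos : ∀ k ∈ Finset.Icc 0 (s + n1 + n2), 0 < π k)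
    (hbal : ∀ k, 1 ≤ k → k ≤ s + n1 + n2 →
      π k * depRate s n1 μ θ1 θ2 k = π (k - 1) * lam)
    (hsum : ∑ k ∈ Finset.Icc 0 (s + n1 + n2), π k = 1) :
    lam * (1 - subProb π (Finset.Icc s (s + n1)) (s + n1)) = (s : ℝ) * μ * (1 - subProb π (Finset.Icc s (s + n1)) s) + θ1 * (∑ k ∈ Finset.range (n1 + 1), (k : ℝ) * subProb π (Finset.Icc s (s + n1)) (s + k)) := by
  set S := ∑ k' ∈ Finset.Icc s (s + n1), π k' with hSdef
  have hSpos : 0 < S := by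
    apply Finset.sum_pos
    · intro k hk
      apply hpos
      simp only [Finset.mem_Icc] at hk ⊢
      omega
    · exact ⟨s, by simp⟩
  have hSne : S ≠ 0 := ne_of_gt hSpos
  have hterm : ∀ j ∈ Finset.range n1,
      lam * π (s + j) = π (s + (j + 1)) * ((s : ℝ) * μ + ((j : ℝ) + 1) * θ1) := by
    intro j hj
    simp only [Finset.mem_range] at hj
    have h := hbal (s + j + 1) (by omega) (by omega)
    have hdep : depRate s n1 μ θ1 θ2 (s + j + 1) = (s : ℝ) * μ + ((j : ℝ) + 1) * θ1 := by
      unfold depRate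
      rw [if_neg (by omega), if_pos (by omega)]
      push_cast
      ring
    rw [hdep] at h
    have h1 : s + j + 1 - 1 = s + j := by omega
    rw [h1] at h
    have h2 : s + (j + 1) = s + j + 1 := by omega
    rw [h2]
    linarith
  have hSr : S = ∑ j ∈ Finset.range (n1 + 1), π (s + j) := by
    rw [hSdef, ← Finset.Ico_add_one_right_eq_Icc, Finset.sum_Ico_eq_sum_range,
      show s + n1 + 1 - s = n1 + 1 from by omega]
  have key : lam * (S - π (s + n1)) = (s : ℝ) * μ * (S - π s)
      + θ1 * ∑ k ∈ Finset.range (n1 + 1), (k : ℝ) * π (s + k) := by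
    have lhs_eq : lam * (S - π (s + n1))
        = ∑ j ∈ Finset.range n1, π (s + (j + 1)) * ((s : ℝ) * μ + ((j : ℝ) + 1) * θ1) := by
      rw [hSr, Finset.sum_range_succ, add_sub_cancel_right, Finset.mul_sum]
      exact Finset.sum_congr rfl hterm
    rw [lhs_eq, hSr, Finset.sum_range_succ' (fun j => π (s + j)),
      Finset.sum_range_succ' (fun k => (k : ℝ) * π (s + k))]
    push_cast
    simp only [Nat.add_zero, Nat.cast_zero, zero_mul, add_zero]
    rw [add_sub_cancel_right, Finset.mul_sum, Finset.mul_sum, ← Finset.sum_add_distrib]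
    exact Finset.sum_congr rfl fun j _ => by ring
  have hdivsum : ∑ k ∈ Finset.range (n1 + 1), (k : ℝ) * (π (s + k) / S)
      = (∑ k ∈ Finset.range (n1 + 1), (k : ℝ) * π (s + k)) / S := by
    rw [Finset.sum_div]
    exact Finset.sum_congr rfl (fun k _ => by ring)
  simp only [subProb, ← hSdef]
  rw [hdivsum]
  field_simp
  linarith [key]
end

section
/- Flow conservation for subchain 2: λ·(1 − π^2_{s+n1+n2}) = (s·μ + n1·θ1)·(1 − π^2_{s+n1}) + θ2·(L^2 − n1), where L^2 = Σ_{k=0}^{n2} (n1+k)·π^2_{s+n1+k}. (Flow conservation law used in the proof of Proposition 2.) -/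
open Finset

theorem stmt_16 (lam μ θ1 θ2 : ℝ) (hlam : 0 < lam) (hμ : 0 < μ)
    (hθ1 : 0 < θ1) (hθ2 : 0 < θ2) (s n1 n2 : ℕ) (hs : 1 ≤ s) (π : ℕ → ℝ)
    (hpos : ∀ k ∈ Finset.Icc 0 (s + n1 + n2), 0 < π k)
    (hbal : ∀ k, 1 ≤ k → k ≤ s + n1 + n2 →
      π k * depRate s n1 μ θ1 θ2 k = π (k - 1) * lam)
    (hsum : ∑ k ∈ Finset.Icc 0 (s + n1 + n2), π k = 1) :
    lam * (1 - subProb π (Finset.Icc (s + n1) (s + n1 + n2)) (s + n1 + n2)) =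
      ((s : ℝ) * μ + (n1 : ℝ) * θ1) * (1 - subProb π (Finset.Icc (s + n1) (s + n1 + n2)) (s + n1)) + θ2 * ((∑ k ∈ Finset.range (n2 + 1), ((n1 : ℝ) + (k : ℝ)) * subProb π (Finset.Icc (s + n1) (s + n1 + n2)) (s + n1 + k)) - (n1 : ℝ)) := by
  set f : ℕ → ℝ := fun k => π (s + n1 + k) with hf
  have hIcc : ∑ k' ∈ Finset.Icc (s + n1) (s + n1 + n2), π k'
      = ∑ k ∈ Finset.range (n2 + 1), f k := by
    rw [← Finset.Ico_add_one_right_eq_Icc, Finset.sum_Ico_eq_sum_range]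
    have h : s + n1 + n2 + 1 - (s + n1) = n2 + 1 := by omega
    rw [h]
  set S : ℝ := ∑ k ∈ Finset.range (n2 + 1), f k with hSdef
  have hfpos : ∀ k ∈ Finset.range (n2 + 1), 0 < f k := by
    intro k hk
    exact hpos _ (Finset.mem_Icc.mpr ⟨Nat.zero_le _, by
      simp only [Finset.mem_range] at hk; omega⟩)
  have hS0 : 0 < S := Finset.sum_pos hfpos (by simp)
  -- key sum identity (balance equations)
  have hstep : ∀ j ∈ Finset.range n2,
      lam * f j = f (j + 1) * ((s : ℝ) * μ + (n1 : ℝ) * θ1 + ((j : ℝ) + 1) * θ2) := by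
    intro j hj
    simp only [Finset.mem_range] at hj
    have h := hbal (s + n1 + (j + 1)) (by omega) (by omega)
    have hd : depRate s n1 μ θ1 θ2 (s + n1 + (j + 1))
        = (s : ℝ) * μ + (n1 : ℝ) * θ1 + ((j : ℝ) + 1) * θ2 := by
      unfold depRate
      rw [if_neg (by omega), if_neg (by omega)]
      push_cast
      ring
    have hsub : s + n1 + (j + 1) - 1 = s + n1 + j := by omega
    rw [hd, hsub] at h
    simp only [hf]
    linarith [h]
  have key : lam * (S - f n2)
      = ((s : ℝ) * μ + (n1 : ℝ) * θ1) * (S - f 0)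
        + θ2 * (∑ k ∈ Finset.range (n2 + 1), (k : ℝ) * f k) := by
    have h1 : S - f n2 = ∑ j ∈ Finset.range n2, f j := by
      rw [hSdef, Finset.sum_range_succ]; ring
    have h2 : S - f 0 = ∑ j ∈ Finset.range n2, f (j + 1) := by
      rw [hSdef, Finset.sum_range_succ']; ring
    have h3 : (∑ k ∈ Finset.range (n2 + 1), (k : ℝ) * f k)
        = ∑ j ∈ Finset.range n2, ((j : ℝ) + 1) * f (j + 1) := by
      rw [Finset.sum_range_succ']
      push_cast
      simp
    rw [h1, h2, h3, Finset.mul_sum, Finset.mul_sum, Finset.mul_sum,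
      ← Finset.sum_add_distrib]
    refine Finset.sum_congr rfl fun j hj => ?_
    rw [hstep j hj]
    ring
  -- rewrite goal in terms of f and S
  have hsubP : ∀ k, subProb π (Finset.Icc (s + n1) (s + n1 + n2)) (s + n1 + k)
      = f k / S := by
    intro k
    rw [subProb, hIcc]
  have e0 : subProb π (Finset.Icc (s + n1) (s + n1 + n2)) (s + n1) = f 0 / S := by
    have := hsubP 0
    simpa using this
  have eLast : subProb π (Finset.Icc (s + n1) (s + n1 + n2)) (s + n1 + n2)
      = f n2 / S := hsubP n2
  have hsum2 : (∑ k ∈ Finset.range (n2 + 1),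
      ((n1 : ℝ) + (k : ℝ)) * subProb π (Finset.Icc (s + n1) (s + n1 + n2)) (s + n1 + k))
      = ((n1 : ℝ) * S + ∑ k ∈ Finset.range (n2 + 1), (k : ℝ) * f k) / S := by
    have : (∑ k ∈ Finset.range (n2 + 1),
        ((n1 : ℝ) + (k : ℝ)) * subProb π (Finset.Icc (s + n1) (s + n1 + n2)) (s + n1 + k))
        = ∑ k ∈ Finset.range (n2 + 1), ((n1 : ℝ) * f k + (k : ℝ) * f k) / S := by
      refine Finset.sum_congr rfl fun k hk => ?_
      rw [hsubP k]
      ring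
    rw [this, ← Finset.sum_div, Finset.sum_add_distrib, ← Finset.mul_sum]
  rw [e0, eLast, hsum2]
  have hS0' : S ≠ 0 := ne_of_gt hS0
  field_simp
  ring_nf
  ring_nf at key
  linarith [key]
end
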